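/- arXiv:2504.02019 — 4 statements merged into one kernel-verified Lean document; each statement's English description precedes it below -/
import Mathlib

section
/- For any cooperative game (N, ν) with n players, the Shapley value of each player i ∈ N equals the weighted average of its extended marginal contributions over all coalitions: φ_i = Σ_{S ⊆ N} [1 / ((n+1)·C(n,|S|))] · Δ'_i(S). -/
/-!
Split the coalitions `S ⊆ N` by whether they contain `i`: both `S` and `S ∪ {i}` (for `i ∉ S`)
have extended marginal contribution `Δ_i(S)`, so the right-hand side collects the weight
`L(n, |S|) + L(n, |S| + 1)` on `Δ_i(S)`, where `L(n, k) = 1 / ((n + 1) C(n, k))` is the Leibniz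
harmonic triangle. Its defining recurrence `L(n - 1, k) = L(n, k) + L(n, k + 1)` turns this weight
into the Shapley weight.
-/

open Finset

theorem one_div_succ_mul_choose_eq_add (m k : ℕ) (hk : k ≤ m) :
    (1 : ℝ) / ((m + 1) * m.choose k) =
      1 / ((m + 2) * (m + 1).choose k) + 1 / ((m + 2) * (m + 1).choose (k + 1)) := by
  have hm_choose : 0 < (m.choose k : ℝ) := by exact_mod_cast Nat.choose_pos hk
  have hm_choose' : 0 < ((m + 1).choose k : ℝ) := by exact_mod_cast Nat.choose_pos (by omega)
  have hm_choose_succ : 0 < ((m + 1).choose (k + 1) : ℝ) := by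
    exact_mod_cast Nat.choose_pos (by omega)
  have h_succ : ((m : ℝ) + 1) * m.choose k = (m + 1).choose (k + 1) * (k + 1) := by
    exact_mod_cast Nat.add_one_mul_choose_eq m k
  have h_same : (m.choose k : ℝ) * (m + 1) = (m + 1).choose k * (m + 1 - k) := by
    have h := congrArg (Nat.cast : ℕ → ℝ) (Nat.choose_mul_succ_eq m k)
    push_cast [Nat.cast_sub (show k ≤ m + 1 by omega)] at h
    exact h
  field_simp
  linear_combination (-((m + 1).choose k : ℝ)) * h_succ - ((m + 1).choose (k + 1) : ℝ) * h_same

theorem Finset.sum_powerset_eq_sum_powerset_erase {α M : Type*} [DecidableEq α] [AddCommMonoid M]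
    {s : Finset α} {a : α} (ha : a ∈ s) (f : Finset α → M) :
    ∑ t ∈ s.powerset, f t = ∑ t ∈ (s.erase a).powerset, (f t + f (insert a t)) := by
  conv_lhs => rw [← insert_erase ha]
  rw [sum_powerset_insert (notMem_erase a s), sum_add_distrib]

theorem shapley_eq_extended_marginal_contributions_general
    {ι : Type*} [Fintype ι] [DecidableEq ι]
    (ν : Finset ι → ℝ) (i : ι) :
    (∑ S ∈ (Finset.univ.erase i).powerset,
        (1 / ((Fintype.card ι : ℝ) * ((Fintype.card ι - 1).choose S.card))) *
          (ν (insert i S) - ν S))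
      = ∑ S : Finset ι,
          (1 / (((Fintype.card ι : ℝ) + 1) * ((Fintype.card ι).choose S.card))) *
            (ν (insert i S) - ν (S.erase i)) := by
  obtain ⟨m, hm⟩ : ∃ m, Fintype.card ι = m + 1 :=
    Nat.exists_eq_add_one.mpr (Fintype.card_pos_iff.mpr ⟨i⟩)
  rw [← powerset_univ, sum_powerset_eq_sum_powerset_erase (mem_univ i)]
  refine sum_congr rfl fun S hS => ?_
  have hiS : i ∉ S := fun h => notMem_erase i univ (mem_powerset.mp hS h)
  have hS_card : S.card ≤ m := by
    simpa [hm] using card_le_card (mem_powerset.mp hS)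
  rw [insert_idem, erase_insert hiS, erase_eq_of_notMem hiS, card_insert_of_notMem hiS, ← add_mul,
    hm, Nat.add_sub_cancel]
  push_cast
  rw [one_div_succ_mul_choose_eq_add m S.card hS_card]
  ring

/-- For any cooperative game `(N, ν)` with `n` players, the Shapley value of each
player `i` equals the weighted average of its extended marginal contributions:
`φ_i = ∑_{S ⊆ N} 1/((n+1)·C(n,|S|)) · Δ'_i(S)` where `Δ'_i(S) = ν(S ∪ {i}) − ν(S \ {i})`. -/
theorem shapley_eq_extended_marginal_contributions
    {ι : Type*} [Fintype ι] [DecidableEq ι]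
    (ν : Finset ι → ℝ) (hν : ν ∅ = 0) (i : ι) :
    (∑ S ∈ (Finset.univ.erase i).powerset,
        (1 / ((Fintype.card ι : ℝ) * ((Fintype.card ι - 1).choose S.card))) *
          (ν (insert i S) - ν S))
      = ∑ S : Finset ι,
          (1 / (((Fintype.card ι : ℝ) + 1) * ((Fintype.card ι).choose S.card))) *
            (ν (insert i S) - ν (S.erase i)) :=
  shapley_eq_extended_marginal_contributions_general ν i
end

section
/- For any cooperative game (N, ν) with n players and any two distinct players i ≠ j, the covariance of the extended marginal contributions Δ'_i(S) and Δ'_j(S) when S is drawn from the CMCS distribution equals (1/(n+1)) · Σ_{S ⊆ N\{i}} Δ_i(S) · ( Δ'_j(S)/C(n,|S|) + Δ'_j(S ∪ {i})/C(n,|S|+1) ) − φ_i·φ_j, where the covariance is Cov(X,Y) = E[XY] − E[X]·E[Y] with expectations taken over the CMCS distribution. -/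
/-!
Pair each coalition `S ∌ i` with `S ∪ {i}`: both have extended marginal contribution
`Δ'_i = Δ_i(S)`, and their CMCS probabilities add up to the Shapley weight of `S`, because
`1/C(n,s) + 1/C(n,s+1) = (n+1)/(n·C(n-1,s))`. Hence `E[Δ'_i] = φ_i`, and the same pairing
rewrites `E[Δ'_i Δ'_j]` as the sum in the statement.
-/

open Finset

theorem Finset.sum_eq_sum_powerset_erase_add_insert {ι : Type*} [Fintype ι] [DecidableEq ι]
    {M : Type*} [AddCommMonoid M] (i : ι) (g : Finset ι → M) :
    ∑ S : Finset ι, g S = ∑ S ∈ (univ.erase i).powerset, (g S + g (insert i S)) := by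
  rw [← powerset_univ, ← insert_erase (mem_univ i),
    sum_powerset_insert (notMem_erase i _), erase_insert (notMem_erase i _), sum_add_distrib]

theorem Nat.inv_succ_mul_choose_add_inv_succ_mul_choose_succ {n s : ℕ} (h : s < n) :
    1 / (((n : ℝ) + 1) * n.choose s) + 1 / (((n : ℝ) + 1) * n.choose (s + 1))
      = 1 / ((n : ℝ) * (n - 1).choose s) := by
  have hx : (0 : ℝ) < n.choose s := by exact_mod_cast Nat.choose_pos h.le
  have hy : (0 : ℝ) < n.choose (s + 1) := by exact_mod_cast Nat.choose_pos h
  have hz : (0 : ℝ) < (n - 1).choose s := by exact_mod_cast Nat.choose_pos (by omega)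
  have hn : (0 : ℝ) < n := by exact_mod_cast h.trans_le' (Nat.zero_le s)
  have h₁ : (n : ℝ) * (n - 1).choose s = n.choose (s + 1) * (s + 1) := by
    obtain ⟨m, rfl⟩ := Nat.exists_eq_add_of_lt h
    exact_mod_cast Nat.add_one_mul_choose_eq (s + m) s
  have h₂ : (n.choose (s + 1) : ℝ) * (s + 1) = n.choose s * ((n : ℝ) - s) := by
    rw [← Nat.cast_sub h.le]
    exact_mod_cast Nat.choose_succ_right_eq n s
  rw [h₁]
  field_simp
  linear_combination h₂

section

variable {ι : Type*} [Fintype ι] [DecidableEq ι]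

theorem cmcs_sum_pair_eq (i : ι) (f : Finset ι → ℝ) :
    ∑ S : Finset ι,
        1 / (((Fintype.card ι : ℝ) + 1) * (Fintype.card ι).choose S.card) * f S
      = ∑ S ∈ (univ.erase i).powerset,
          (1 / (((Fintype.card ι : ℝ) + 1) * (Fintype.card ι).choose S.card) * f S
            + 1 / (((Fintype.card ι : ℝ) + 1) * (Fintype.card ι).choose (S.card + 1))
              * f (insert i S)) := by
  rw [sum_eq_sum_powerset_erase_add_insert i]
  refine sum_congr rfl fun S hS => ?_
  have hiS : i ∉ S := (subset_erase.mp (mem_powerset.mp hS)).2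
  rw [card_insert_of_notMem hiS]

theorem cmcs_expectation_extMarginal_eq_shapley (ν : Finset ι → ℝ) (i : ι) :
    ∑ S : Finset ι,
        1 / (((Fintype.card ι : ℝ) + 1) * (Fintype.card ι).choose S.card)
          * (ν (insert i S) - ν (S.erase i))
      = ∑ S ∈ (univ.erase i).powerset,
          1 / ((Fintype.card ι : ℝ) * (Fintype.card ι - 1).choose S.card)
            * (ν (insert i S) - ν S) := by
  rw [cmcs_sum_pair_eq i]
  refine sum_congr rfl fun S hS => ?_
  have hiS : i ∉ S := (subset_erase.mp (mem_powerset.mp hS)).2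
  rw [erase_eq_of_notMem hiS, erase_insert hiS, insert_idem, ← add_mul,
    Nat.inv_succ_mul_choose_add_inv_succ_mul_choose_succ (card_lt_univ_of_notMem hiS)]

theorem cmcs_expectation_extMarginal_mul_eq (ν g : Finset ι → ℝ) (i : ι) :
    ∑ S : Finset ι,
        1 / (((Fintype.card ι : ℝ) + 1) * (Fintype.card ι).choose S.card)
          * ((ν (insert i S) - ν (S.erase i)) * g S)
      = 1 / ((Fintype.card ι : ℝ) + 1) *
          ∑ S ∈ (univ.erase i).powerset,
            (ν (insert i S) - ν S) *
              (g S / (Fintype.card ι).choose S.card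
                + g (insert i S) / (Fintype.card ι).choose (S.card + 1)) := by
  rw [cmcs_sum_pair_eq i, mul_sum]
  refine sum_congr rfl fun S hS => ?_
  have hiS : i ∉ S := (subset_erase.mp (mem_powerset.mp hS)).2
  rw [erase_eq_of_notMem hiS, erase_insert hiS, insert_idem]
  simp only [one_div, mul_inv]
  ring

end

theorem cmcs_covariance_general
    {ι : Type*} [Fintype ι] [DecidableEq ι]
    (ν : Finset ι → ℝ) (i j : ι) :
    (∑ S : Finset ι,
        (1 / (((Fintype.card ι : ℝ) + 1) * ((Fintype.card ι).choose S.card))) *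
          ((ν (insert i S) - ν (S.erase i)) * (ν (insert j S) - ν (S.erase j))))
      - (∑ S : Finset ι,
            (1 / (((Fintype.card ι : ℝ) + 1) * ((Fintype.card ι).choose S.card))) *
              (ν (insert i S) - ν (S.erase i))) *
        (∑ S : Finset ι,
            (1 / (((Fintype.card ι : ℝ) + 1) * ((Fintype.card ι).choose S.card))) *
              (ν (insert j S) - ν (S.erase j)))
      = (1 / ((Fintype.card ι : ℝ) + 1)) *
          (∑ S ∈ (Finset.univ.erase i).powerset,
            (ν (insert i S) - ν S) *
              ((ν (insert j S) - ν (S.erase j)) / ((Fintype.card ι).choose S.card : ℝ) +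
               (ν (insert j (insert i S)) - ν ((insert i S).erase j)) /
                 ((Fintype.card ι).choose (S.card + 1) : ℝ)))
        - (∑ S ∈ (Finset.univ.erase i).powerset,
              (1 / ((Fintype.card ι : ℝ) * ((Fintype.card ι - 1).choose S.card))) *
                (ν (insert i S) - ν S)) *
          (∑ S ∈ (Finset.univ.erase j).powerset,
              (1 / ((Fintype.card ι : ℝ) * ((Fintype.card ι - 1).choose S.card))) *
                (ν (insert j S) - ν S)) := by
  rw [cmcs_expectation_extMarginal_mul_eq ν (fun S => ν (insert j S) - ν (S.erase j)) i,
    cmcs_expectation_extMarginal_eq_shapley ν i, cmcs_expectation_extMarginal_eq_shapley ν j]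

/-- For any cooperative game and distinct players `i ≠ j`, the covariance (under the
CMCS distribution) of the extended marginal contributions `Δ'_i(S)` and `Δ'_j(S)`,
defined as `E[Δ'_i(S)·Δ'_j(S)] − E[Δ'_i(S)]·E[Δ'_j(S)]`, equals
`(1/(n+1)) · ∑_{S ⊆ N\{i}} Δ_i(S)·(Δ'_j(S)/C(n,|S|) + Δ'_j(S∪{i})/C(n,|S|+1)) − φ_i·φ_j`. -/
theorem cmcs_covariance
    {ι : Type*} [Fintype ι] [DecidableEq ι]
    (ν : Finset ι → ℝ) (hν : ν ∅ = 0) (i j : ι) (hij : i ≠ j) :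
    (∑ S : Finset ι,
        (1 / (((Fintype.card ι : ℝ) + 1) * ((Fintype.card ι).choose S.card))) *
          ((ν (insert i S) - ν (S.erase i)) * (ν (insert j S) - ν (S.erase j))))
      - (∑ S : Finset ι,
            (1 / (((Fintype.card ι : ℝ) + 1) * ((Fintype.card ι).choose S.card))) *
              (ν (insert i S) - ν (S.erase i))) *
        (∑ S : Finset ι,
            (1 / (((Fintype.card ι : ℝ) + 1) * ((Fintype.card ι).choose S.card))) *
              (ν (insert j S) - ν (S.erase j)))
      = (1 / ((Fintype.card ι : ℝ) + 1)) *
          (∑ S ∈ (Finset.univ.erase i).powerset,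
            (ν (insert i S) - ν S) *
              ((ν (insert j S) - ν (S.erase j)) / ((Fintype.card ι).choose S.card : ℝ) +
               (ν (insert j (insert i S)) - ν ((insert i S).erase j)) /
                 ((Fintype.card ι).choose (S.card + 1) : ℝ)))
        - (∑ S ∈ (Finset.univ.erase i).powerset,
              (1 / ((Fintype.card ι : ℝ) * ((Fintype.card ι - 1).choose S.card))) *
                (ν (insert i S) - ν S)) *
          (∑ S ∈ (Finset.univ.erase j).powerset,
              (1 / ((Fintype.card ι : ℝ) * ((Fintype.card ι - 1).choose S.card))) *
                (ν (insert j S) - ν S)) :=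
  cmcs_covariance_general ν i j
end

section
/- In the game on n ≥ 2 players with ν(N) = 1 and ν(S) = 0 for all S ≠ N, for any two distinct players i ≠ j the covariance of Δ'_i(S) and Δ'_j(S) under the CMCS distribution equals 1/(n+1) − 1/n², and this quantity is strictly positive for every n ≥ 2. -/
open Finset

/-- In the game on `n ≥ 2` players with `ν(N) = 1` and `ν(S) = 0` for `S ≠ N`, for any
distinct players `i ≠ j` the covariance of `Δ'_i(S)` and `Δ'_j(S)` under the CMCS
distribution equals `1/(n+1) − 1/n²`, and this quantity is strictly positive. -/
theorem unanimity_game_cmcs_covariance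
    {ι : Type*} [Fintype ι] [DecidableEq ι] (hn : 2 ≤ Fintype.card ι)
    (ν : Finset ι → ℝ) (hν1 : ν Finset.univ = 1)
    (hν0 : ∀ S : Finset ι, S ≠ Finset.univ → ν S = 0) (i j : ι) (hij : i ≠ j) :
    ((∑ S : Finset ι,
        (1 / (((Fintype.card ι : ℝ) + 1) * ((Fintype.card ι).choose S.card))) *
          ((ν (insert i S) - ν (S.erase i)) * (ν (insert j S) - ν (S.erase j))))
      - (∑ S : Finset ι,
            (1 / (((Fintype.card ι : ℝ) + 1) * ((Fintype.card ι).choose S.card))) *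
              (ν (insert i S) - ν (S.erase i))) *
        (∑ S : Finset ι,
            (1 / (((Fintype.card ι : ℝ) + 1) * ((Fintype.card ι).choose S.card))) *
              (ν (insert j S) - ν (S.erase j)))
      = 1 / ((Fintype.card ι : ℝ) + 1) - 1 / (Fintype.card ι : ℝ) ^ 2)
    ∧ 0 < 1 / ((Fintype.card ι : ℝ) + 1) - 1 / (Fintype.card ι : ℝ) ^ 2 := by
  classical
  have hnR : (2:ℝ) ≤ (Fintype.card ι : ℝ) := by exact_mod_cast hn
  have hn0 : (0:ℝ) < (Fintype.card ι : ℝ) := by linarith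
  have hkey : ∀ (k : ι) (S : Finset ι),
      ν (insert k S) - ν (S.erase k) = if Finset.univ.erase k ⊆ S then 1 else 0 := by
    intro k S
    have h1 : ν (S.erase k) = 0 := by
      apply hν0
      intro h
      have := Finset.mem_univ k
      rw [← h] at this
      exact Finset.notMem_erase k S this
    rw [h1, sub_zero]
    by_cases h : Finset.univ.erase k ⊆ S
    · have hins : insert k S = Finset.univ := by
        apply Finset.eq_univ_of_forall
        intro x
        by_cases hx : x = k
        · simp [hx]
        · exact Finset.mem_insert_of_mem (h (Finset.mem_erase.mpr ⟨hx, Finset.mem_univ x⟩))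
      rw [hins, hν1, if_pos h]
    · rw [if_neg h]
      apply hν0
      intro he
      apply h
      intro x hx
      have hx' : x ≠ k := (Finset.mem_erase.mp hx).1
      have : x ∈ insert k S := he ▸ Finset.mem_univ x
      rcases Finset.mem_insert.mp this with h' | h'
      · exact absurd h' hx'
      · exact h'
  have hsup : ∀ (k : ι) (S : Finset ι),
      Finset.univ.erase k ⊆ S ↔ S = Finset.univ.erase k ∨ S = Finset.univ := by
    intro k S
    constructor
    · intro h
      by_cases hk : k ∈ S
      · right
        apply Finset.eq_univ_of_forall
        intro x
        by_cases hx : x = k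
        · rwa [hx]
        · exact h (Finset.mem_erase.mpr ⟨hx, Finset.mem_univ x⟩)
      · left
        apply Finset.Subset.antisymm
        · intro x hx
          exact Finset.mem_erase.mpr ⟨fun h' => hk (h' ▸ hx), Finset.mem_univ x⟩
        · exact h
    · rintro (rfl | rfl)
      · exact Finset.Subset.refl _
      · exact Finset.subset_univ _
  have hne : ∀ k : ι, Finset.univ.erase k ≠ (Finset.univ : Finset ι) := by
    intro k h
    have := Finset.mem_univ k
    rw [← h] at this
    exact Finset.notMem_erase k _ this
  have hcard_erase : ∀ k : ι, (Finset.univ.erase k).card = Fintype.card ι - 1 := by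
    intro k
    rw [Finset.card_erase_of_mem (Finset.mem_univ k), Finset.card_univ]
  have hchoose_erase : ((Fintype.card ι).choose (Fintype.card ι - 1)) = Fintype.card ι := by
    rw [Nat.choose_symm (by omega : 1 ≤ Fintype.card ι), Nat.choose_one_right]
  have hchoose_univ : ((Fintype.card ι).choose ((Finset.univ : Finset ι)).card) = 1 := by
    rw [Finset.card_univ, Nat.choose_self]
  -- single-player expectations
  have hE : ∀ k : ι,
      (∑ S : Finset ι,
          (1 / (((Fintype.card ι : ℝ) + 1) * ((Fintype.card ι).choose S.card))) *
            (ν (insert k S) - ν (S.erase k))) = 1 / (Fintype.card ι : ℝ) := by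
    intro k
    have h1 : (∑ S : Finset ι,
          (1 / (((Fintype.card ι : ℝ) + 1) * ((Fintype.card ι).choose S.card))) *
            (ν (insert k S) - ν (S.erase k)))
        = ∑ S ∈ Finset.univ.filter (fun S : Finset ι => Finset.univ.erase k ⊆ S),
            (1 / (((Fintype.card ι : ℝ) + 1) * ((Fintype.card ι).choose S.card))) := by
      rw [Finset.sum_filter]
      apply Finset.sum_congr rfl
      intro S _
      rw [hkey k S]
      split <;> simp
    have h2 : Finset.univ.filter (fun S : Finset ι => Finset.univ.erase k ⊆ S)
        = {Finset.univ.erase k, Finset.univ} := by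
      ext S
      simp [hsup k S]
    rw [h1, h2, Finset.sum_pair (hne k), hchoose_univ, hcard_erase k, hchoose_erase]
    push_cast
    field_simp
    ring
  have hEprod : (∑ S : Finset ι,
        (1 / (((Fintype.card ι : ℝ) + 1) * ((Fintype.card ι).choose S.card))) *
          ((ν (insert i S) - ν (S.erase i)) * (ν (insert j S) - ν (S.erase j))))
      = 1 / ((Fintype.card ι : ℝ) + 1) := by
    have h1 : ∀ S : Finset ι,
        (ν (insert i S) - ν (S.erase i)) * (ν (insert j S) - ν (S.erase j))
          = if S = Finset.univ then 1 else 0 := by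
      intro S
      rw [hkey i S, hkey j S]
      by_cases hS : S = Finset.univ
      · subst hS
        rw [if_pos (Finset.subset_univ _), if_pos (Finset.subset_univ _), if_pos rfl, one_mul]
      · rw [if_neg hS]
        by_cases hi : Finset.univ.erase i ⊆ S
        · rcases (hsup i S).mp hi with rfl | rfl
          · have hj : ¬ Finset.univ.erase j ⊆ Finset.univ.erase i := by
              intro h
              have : i ∈ Finset.univ.erase j := Finset.mem_erase.mpr ⟨hij, Finset.mem_univ i⟩
              exact Finset.notMem_erase i _ (h this)
            rw [if_neg hj, mul_zero]
          · exact absurd rfl hS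
        · rw [if_neg hi, zero_mul]
    have h2 : (∑ S : Finset ι,
        (1 / (((Fintype.card ι : ℝ) + 1) * ((Fintype.card ι).choose S.card))) *
          ((ν (insert i S) - ν (S.erase i)) * (ν (insert j S) - ν (S.erase j))))
        = ∑ S : Finset ι, if S = Finset.univ then
            (1 / (((Fintype.card ι : ℝ) + 1) * ((Fintype.card ι).choose S.card))) else 0 := by
      apply Finset.sum_congr rfl
      intro S _
      rw [h1 S]
      split <;> simp
    rw [h2, Finset.sum_ite_eq' Finset.univ Finset.univ, if_pos (Finset.mem_univ _),
      hchoose_univ]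
    push_cast
    ring
  constructor
  · rw [hE i, hE j, hEprod]
    field_simp
  · rw [sub_pos, div_lt_div_iff₀ (by positivity) (by positivity)]
    nlinarith
end

section
/- Let N be a finite set, k ≤ |N|, let (φ_i)_{i∈N} be real numbers (the Shapley values), M ≥ 1 an integer, and (σ_{i,j})_{i≠j} positive reals. Let K̂ be a random subset of N of size k and (φ̂_i)_{i∈N} real-valued random variables on the same probability space such that: (a) whenever φ̂_i > φ̂_j for all i ∈ K and j ∈ N\K for some size-k subset K, then K̂ = K; and (b) for every i ≠ j the random variable φ̂_i − φ̂_j has the Gaussian law with mean φ_i − φ_j and variance σ_{i,j}²/M. Then for any finite family 𝕂 of size-k subsets of N, P(K̂ ∈ 𝕂) ≥ Σ_{K ∈ 𝕂} [ 1 − Σ_{i ∈ K, j ∈ N\K} Φ( √M · (φ_j − φ_i) / σ_{i,j} ) ], where Φ is the standard normal cumulative distribution function. -/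
/-!
Let `E_K` be the event that every `φ̂_i` with `i ∈ K` beats every `φ̂_j` with `j ∈ N \ K`.
By the selection rule `E_K ⊆ {K̂ = K}`, so the events `E_K` are pairwise disjoint and
`P(K̂ ∈ 𝕂) ≥ ∑_{K ∈ 𝕂} P(E_K)`. The complement of `E_K` is the union of the events
`φ̂_i ≤ φ̂_j`, and by the Gaussian law of `φ̂_i - φ̂_j` each of these has probability
`Φ(√M (φ_j - φ_i) / σ_{i,j})`; the union bound then gives `P(E_K) ≥ 1 - ∑ Φ(…)`.
-/

open Finset MeasureTheory ProbabilityTheory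
open scoped NNReal

namespace MeasureTheory

variable {Ω : Type*} [MeasurableSpace Ω] {P : Measure Ω}

lemma sum_measureReal_le_measureReal_preimage [IsFiniteMeasure P] {α : Type*} (f : Ω → α)
    (S : Finset α) {E : α → Set Ω} (hE : ∀ a ∈ S, MeasurableSet (E a))
    (hEf : ∀ a ∈ S, E a ⊆ f ⁻¹' {a}) :
    ∑ a ∈ S, P.real (E a) ≤ P.real (f ⁻¹' S) := by
  have hdisj : (S : Set α).PairwiseDisjoint E := fun a ha b hb hab ↦
    ((Set.disjoint_singleton.mpr hab).preimage f).mono (hEf a ha) (hEf b hb)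
  rw [← measureReal_biUnion_finset hdisj hE]
  exact measureReal_mono <| Set.iUnion₂_subset fun a ha ↦
    (hEf a ha).trans (Set.preimage_mono (Set.singleton_subset_iff.mpr ha))

end MeasureTheory

namespace ProbabilityTheory

lemma cdf_gaussianReal {μ : ℝ} {v : ℝ≥0} (hv : v ≠ 0) (x : ℝ) :
    cdf (gaussianReal μ v) x = cdf (gaussianReal 0 1) ((x - μ) / √v) := by
  have hsqrt : 0 < √(v : ℝ) := Real.sqrt_pos.mpr (by positivity)
  have hstd : (gaussianReal μ v).map (fun y ↦ (y - μ) / √v) = gaussianReal 0 1 := by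
    rw [show (fun y ↦ (y - μ) / √v) = (· / √v) ∘ (· - μ) from rfl,
      ← Measure.map_map (by fun_prop) (by fun_prop), gaussianReal_map_sub_const,
      gaussianReal_map_div_const, sub_self, zero_div]
    congr 1
    ext
    simp [Real.sq_sqrt v.coe_nonneg, hv]
  have hpre : (fun y ↦ (y - μ) / √v) ⁻¹' Set.Iic ((x - μ) / √v) = Set.Iic x := by
    ext y
    simp [div_le_div_iff_of_pos_right hsqrt]
  rw [cdf_eq_real, cdf_eq_real, ← hstd, map_measureReal_apply (by fun_prop) measurableSet_Iic,
    hpre]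

variable {Ω : Type*} [MeasurableSpace Ω] {P : Measure Ω}

lemma measureReal_setOf_le_of_map_eq_gaussianReal {X : Ω → ℝ} (hX : Measurable X) {μ : ℝ}
    {v : ℝ≥0} (hv : v ≠ 0) (hlaw : P.map X = gaussianReal μ v) (x : ℝ) :
    P.real {ω | X ω ≤ x} = cdf (gaussianReal 0 1) ((x - μ) / √v) := by
  rw [← cdf_gaussianReal hv, cdf_eq_real, ← hlaw, map_measureReal_apply hX measurableSet_Iic]
  rfl

lemma measureReal_setOf_le_of_map_sub_eq_gaussianReal {X Y : Ω → ℝ} (hX : Measurable X)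
    (hY : Measurable Y) {a b σ : ℝ} (hσ : 0 < σ) {M : ℕ} (hM : 1 ≤ M)
    (hlaw : P.map (fun ω ↦ X ω - Y ω) = gaussianReal (a - b) (σ ^ 2 / M).toNNReal) :
    P.real {ω | X ω ≤ Y ω} = cdf (gaussianReal 0 1) (√M * (b - a) / σ) := by
  have hM₀ : (0 : ℝ) < M := by exact_mod_cast hM
  have hv : (σ ^ 2 / M).toNNReal ≠ 0 := by positivity
  have hsqrt : √((σ ^ 2 / M).toNNReal : ℝ) = σ / √M := by
    rw [Real.coe_toNNReal _ (by positivity), Real.sqrt_div' _ hM₀.le, Real.sqrt_sq hσ.le]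
  simp_rw [← sub_nonpos (a := X _)]
  rw [measureReal_setOf_le_of_map_eq_gaussianReal (X := fun ω ↦ X ω - Y ω) (by fun_prop) hv
    hlaw, hsqrt]
  congr 1
  rw [div_div_eq_mul_div]
  ring


end ProbabilityTheory

section Separation

variable {ι Ω : Type*} [DecidableEq ι]

def separationEvent (N : Finset ι) (X : ι → Ω → ℝ) (K : Finset ι) : Set Ω :=
  {ω | ∀ i ∈ K, ∀ j ∈ N \ K, X j ω < X i ω}

variable {N K : Finset ι} {X : ι → Ω → ℝ}

lemma compl_separationEvent :
    (separationEvent N X K)ᶜ = ⋃ i ∈ K, ⋃ j ∈ N \ K, {ω | X i ω ≤ X j ω} := by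
  ext ω
  simp only [separationEvent, Set.mem_compl_iff, Set.mem_ofPred_eq, Set.mem_iUnion, not_forall,
    not_lt, exists_prop]

variable [MeasurableSpace Ω]

lemma measurableSet_separationEvent (hX : ∀ i, Measurable (X i)) :
    MeasurableSet (separationEvent N X K) := by
  simp only [separationEvent, Set.ofPred_forall]
  exact .biInter K.countable_toSet fun i _ ↦ .biInter (N \ K).countable_toSet fun j _ ↦
    measurableSet_lt (hX j) (hX i)

lemma one_sub_sum_le_measureReal_separationEvent (P : Measure Ω) [IsProbabilityMeasure P] :
    1 - ∑ i ∈ K, ∑ j ∈ N \ K, P.real {ω | X i ω ≤ X j ω} ≤ P.real (separationEvent N X K) := by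
  set E := separationEvent N X K
  have hunion : P.real Eᶜ ≤ ∑ i ∈ K, ∑ j ∈ N \ K, P.real {ω | X i ω ≤ X j ω} := calc
    _ = P.real (⋃ i ∈ K, ⋃ j ∈ N \ K, {ω | X i ω ≤ X j ω}) := by rw [compl_separationEvent]
    _ ≤ ∑ i ∈ K, P.real (⋃ j ∈ N \ K, {ω | X i ω ≤ X j ω}) := measureReal_biUnion_finset_le _ _
    _ ≤ _ := sum_le_sum fun i _ ↦ measureReal_biUnion_finset_le _ _
  have htotal : 1 ≤ P.real E + P.real Eᶜ := by
    simpa using measureReal_union_le (μ := P) E Eᶜ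
  linarith

end Separation

theorem topk_gaussian_lower_bound_general
    {ι : Type*} [DecidableEq ι] (N : Finset ι) (k : ℕ)
    (φ : ι → ℝ) (M : ℕ) (hM : 1 ≤ M) (σ : ι → ι → ℝ)
    (hσ : ∀ i j : ι, i ≠ j → 0 < σ i j)
    {Ω : Type*} [MeasurableSpace Ω] (P : Measure Ω) [IsProbabilityMeasure P]
    (Khat : Ω → Finset ι)
    (φhat : ι → Ω → ℝ) (hmeas : ∀ i, Measurable (φhat i))
    (hsel : ∀ ω, ∀ K : Finset ι, K ⊆ N → K.card = k →
      (∀ i ∈ K, ∀ j ∈ N \ K, φhat j ω < φhat i ω) → Khat ω = K)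
    (hlaw : ∀ i j : ι, i ≠ j →
      Measure.map (fun ω => φhat i ω - φhat j ω) P
        = gaussianReal (φ i - φ j) (Real.toNNReal ((σ i j) ^ 2 / M)))
    (𝕂 : Finset (Finset ι)) (h𝕂 : ∀ K ∈ 𝕂, K ⊆ N ∧ K.card = k) :
    ∑ K ∈ 𝕂, (1 - ∑ i ∈ K, ∑ j ∈ N \ K,
        cdf (gaussianReal 0 1) (Real.sqrt M * (φ j - φ i) / σ i j))
      ≤ (P {ω | Khat ω ∈ 𝕂}).toReal := by
  have hpair : ∀ K ∈ 𝕂, ∀ i ∈ K, ∀ j ∈ N \ K,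
      P.real {ω | φhat i ω ≤ φhat j ω} = cdf (gaussianReal 0 1) (√M * (φ j - φ i) / σ i j) := by
    intro K _ i hi j hj
    have hij : i ≠ j := by rintro rfl; exact (mem_sdiff.mp hj).2 hi
    exact measureReal_setOf_le_of_map_sub_eq_gaussianReal (hmeas i) (hmeas j) (hσ i j hij) hM
      (hlaw i j hij)
  calc _ ≤ ∑ K ∈ 𝕂, P.real (separationEvent N φhat K) := sum_le_sum fun K hK ↦ by
        simpa only [← sum_congr rfl fun i hi ↦ sum_congr rfl (hpair K hK i hi)]
          using one_sub_sum_le_measureReal_separationEvent P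
    _ ≤ P.real (Khat ⁻¹' 𝕂) :=
        sum_measureReal_le_measureReal_preimage Khat 𝕂
          (fun _ _ ↦ measurableSet_separationEvent hmeas)
          fun K hK ω hω ↦ hsel ω K (h𝕂 K hK).1 (h𝕂 K hK).2 hω

/-- Theorem 4.1 (inclusion-exclusion lower bound): if `K̂` equals any size-`k` subset
`K` whenever `φ̂_i > φ̂_j` for all `i ∈ K`, `j ∈ N\K`, and for every `i ≠ j` the
difference `φ̂_i − φ̂_j` is Gaussian with mean `φ_i − φ_j` and variance `σ_{i,j}²/M`,
then for any finite family `𝕂` of size-`k` subsets of `N`: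
`P(K̂ ∈ 𝕂) ≥ ∑_{K ∈ 𝕂} (1 − ∑_{i ∈ K, j ∈ N\K} Φ(√M (φ_j − φ_i)/σ_{i,j}))`. -/
theorem topk_gaussian_lower_bound
    {ι : Type*} [DecidableEq ι] (N : Finset ι) (k : ℕ) (hk : k ≤ N.card)
    (φ : ι → ℝ) (M : ℕ) (hM : 1 ≤ M) (σ : ι → ι → ℝ)
    (hσ : ∀ i j : ι, i ≠ j → 0 < σ i j)
    {Ω : Type*} [MeasurableSpace Ω] (P : Measure Ω) [IsProbabilityMeasure P]
    (Khat : Ω → Finset ι) (hKhat : ∀ ω, Khat ω ⊆ N ∧ (Khat ω).card = k)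
    (φhat : ι → Ω → ℝ) (hmeas : ∀ i, Measurable (φhat i))
    (hsel : ∀ ω, ∀ K : Finset ι, K ⊆ N → K.card = k →
      (∀ i ∈ K, ∀ j ∈ N \ K, φhat j ω < φhat i ω) → Khat ω = K)
    (hlaw : ∀ i j : ι, i ≠ j →
      Measure.map (fun ω => φhat i ω - φhat j ω) P
        = gaussianReal (φ i - φ j) (Real.toNNReal ((σ i j) ^ 2 / M)))
    (𝕂 : Finset (Finset ι)) (h𝕂 : ∀ K ∈ 𝕂, K ⊆ N ∧ K.card = k) :
    ∑ K ∈ 𝕂, (1 - ∑ i ∈ K, ∑ j ∈ N \ K,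
        cdf (gaussianReal 0 1) (Real.sqrt M * (φ j - φ i) / σ i j))
      ≤ (P {ω | Khat ω ∈ 𝕂}).toReal :=
  topk_gaussian_lower_bound_general N k φ M hM σ hσ P Khat φhat hmeas hsel hlaw 𝕂 h𝕂
end
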